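/- With notation as in the formal Demazure calculus, the push-pull element Y_α = 1/x_{−α} + (1/x_α) δ_{s_α} satisfies Y_α² = κ_α Y_α, where κ_α = 1/x_α + 1/x_{−α}. -/

import Mathlib

/-!
Multiplying out, `Y_α² = a² δ_e + a b δ_s + b s(a) δ_s + b s(b) δ_{s²}` with `a = 1/x_{−α}` and
`b = 1/x_α`. Since `s` is an involution swapping `x_α` and `x_{−α}`, it swaps `a` and `b`, and
`s² = e`; the coefficients collect to `(a + b) a` at `δ_e` and `(a + b) b` at `δ_s`.
-/

noncomputable section
open scoped Classical

def twMul {Q : Type*} [CommRing Q] {W : Type*} [Group W] [Fintype W]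
    (φ : W →* RingAut Q) (f g : W → Q) : W → Q :=
  fun w => ∑ u : W, f u * φ u (g (u⁻¹ * w))

def tdelta {Q : Type*} [CommRing Q] {W : Type*} [Group W] (w : W) (q : Q) : W → Q :=
  fun v => if v = w then q else 0

section TwistedGroupAlgebra

variable {Q : Type*} [CommRing Q] {W : Type*} [Group W] [Fintype W] (φ : W →* RingAut Q)

lemma twMul_tdelta_tdelta (u v : W) (q r : Q) :
    twMul φ (tdelta u q) (tdelta v r) = tdelta (u * v) (q * φ u r) := by
  funext w
  simp only [twMul, tdelta]
  rw [Finset.sum_eq_single u (fun b _ hb => by simp [hb]) (by simp)]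
  simp only [if_true, inv_mul_eq_iff_eq_mul]
  split_ifs <;> simp

lemma twMul_add_left (f g h : W → Q) : twMul φ (f + g) h = twMul φ f h + twMul φ g h := by
  funext w
  simp [twMul, add_mul, Finset.sum_add_distrib]

lemma twMul_add_right (f g h : W → Q) : twMul φ f (g + h) = twMul φ f g + twMul φ f h := by
  funext w
  simp [twMul, mul_add, Finset.sum_add_distrib]

end TwistedGroupAlgebra

lemma RingAut.apply_apply_of_mul_self_eq_one {Q : Type*} [CommRing Q] {W : Type*} [Monoid W]
    (φ : W →* RingAut Q) {s : W} (hs : s * s = 1) (x : Q) : φ s (φ s x) = x := by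
  rw [← RingAut.mul_apply, ← map_mul, hs, map_one, RingAut.one_apply]

lemma map_units_inv_of_map_eq {M N F : Type*} [Monoid M] [Monoid N] [FunLike F M N]
    [MonoidHomClass F M N] (f : F) {x : Mˣ} {y : Nˣ} (h : f x = y) : f ↑x⁻¹ = ↑y⁻¹ := by
  calc f ↑x⁻¹ = f ↑x⁻¹ * (y * ↑y⁻¹) := by rw [Units.mul_inv, mul_one]
    _ = ↑y⁻¹ := by rw [← h, ← mul_assoc, ← map_mul, Units.inv_mul, map_one, one_mul]

theorem push_pull_element_squared
    {Q : Type*} [CommRing Q] {W : Type*} [Group W] [Fintype W]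
    (φ : W →* RingAut Q) (s : W) (hs : s * s = 1)
    (xa xna : Qˣ) (hswap : φ s (xa : Q) = (xna : Q)) :
    -- Y_α = (1/x_{−α}) δ_e + (1/x_α) δ_{s_α},  κ_α = 1/x_α + 1/x_{−α}
    twMul φ (tdelta (1 : W) ((xna⁻¹ : Qˣ) : Q) + tdelta s ((xa⁻¹ : Qˣ) : Q))
        (tdelta (1 : W) ((xna⁻¹ : Qˣ) : Q) + tdelta s ((xa⁻¹ : Qˣ) : Q)) =
      (((xa⁻¹ : Qˣ) : Q) + ((xna⁻¹ : Qˣ) : Q)) •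
        (tdelta (1 : W) ((xna⁻¹ : Qˣ) : Q) + tdelta s ((xa⁻¹ : Qˣ) : Q)) := by
  have hb : φ s ↑xa⁻¹ = ↑xna⁻¹ := map_units_inv_of_map_eq (φ s) hswap
  have ha : φ s ↑xna⁻¹ = ↑xa⁻¹ := by
    rw [← hb, RingAut.apply_apply_of_mul_self_eq_one φ hs]
  simp only [twMul_add_left, twMul_add_right, twMul_tdelta_tdelta, one_mul, mul_one, hs,
    map_one, RingAut.one_apply, ha, hb]
  funext w
  simp only [tdelta, Pi.add_apply, Pi.smul_apply, smul_eq_mul]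
  split_ifs <;> ring

end
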